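/- arXiv:2406.17506 — 3 statements merged into one kernel-verified Lean document; each statement's English description precedes it below -/
import Mathlib

section
/- For every κ ∈ (−∞, 1) and every integer k ≥ 1, there exists a unique t ∈ (1, 2/(1 + max{κ, 0})) such that T_k(t, κ) = E_k(1 − κ·t) − E_k(1 − t) = 0 (this unique root is the stepsize threshold γ̄_k(κ)). -/
/-- `E_k(x) := Σ_{j=1}^{2k} x^{−j}` (so `E_0 = 0`). -/
noncomputable def Efun (k : ℕ) (x : ℝ) : ℝ := ∑ j ∈ Finset.Icc 1 (2 * k), x ^ (-(j : ℤ))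

/-- `T_k(t, κ) := E_k(1 − κ·t) − E_k(1 − t)`. -/
noncomputable def Tfun (k : ℕ) (t κ : ℝ) : ℝ := Efun k (1 - κ * t) - Efun k (1 - t)

/-!
Pairing consecutive terms gives `E_k(y) = ∑_{m<k} (1 + y) / y^(2m+2)`. For `t ∈ (1, 2/(1 + κ⁺)]`
we have `1 - κt > 0` and `-1 ≤ 1 - t < 0`. As `t → 1⁺`, `E_k(1 - t) → +∞` while `E_k(1 - κt)`
stays bounded, so `T_k → -∞`; at the right endpoint `T_k > 0`, because there either `1 - t = -1`
(when `κ ≤ 0`) or `1 - t = -(1 - κt)`. This gives a root. It is unique because `T_k(·, κ)` is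
strictly increasing: in `∂ₜ T_k` the pairs of terms coming from `-E_k(1 - t)` each contribute more
than `1`, while each of the `2k` terms coming from `E_k(1 - κt)` is at least `-1/2`, by
`2ju ≤ (1 + u)^(j+1)`.
-/

open Finset Filter Topology

theorem Finset.sum_Icc_one_two_mul_eq_sum_range {M : Type*} [AddCommMonoid M] (f : ℕ → M)
    (k : ℕ) : ∑ j ∈ Icc 1 (2 * k), f j = ∑ m ∈ range k, (f (2 * m + 1) + f (2 * m + 2)) := by
  induction k with
  | zero => simp
  | succ k ih =>
    rw [sum_range_succ, ← ih, show 2 * (k + 1) = 2 * k + 1 + 1 by ring,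
      sum_Icc_succ_top (by omega), sum_Icc_succ_top (by omega), add_assoc]

section Efun

variable {k : ℕ}

theorem Efun_eq_sum_range (k : ℕ) (y : ℝ) :
    Efun k y = ∑ m ∈ range k, (1 + y) / y ^ (2 * m + 2) := by
  rw [Efun, sum_Icc_one_two_mul_eq_sum_range]
  refine sum_congr rfl fun m _ => ?_
  simp only [zpow_neg, zpow_natCast]
  rcases eq_or_ne y 0 with rfl | hy
  · simp
  · field_simp
    ring

theorem Efun_neg_one (k : ℕ) : Efun k (-1) = 0 := by
  simp [Efun_eq_sum_range]

theorem one_add_div_sq_le_Efun (hk : 1 ≤ k) {y : ℝ} (hy : -1 ≤ y) :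
    (1 + y) / y ^ 2 ≤ Efun k y := by
  rw [Efun_eq_sum_range]
  exact single_le_sum (f := fun m => (1 + y) / y ^ (2 * m + 2))
    (fun m _ => div_nonneg (by linarith) (Even.pow_nonneg ⟨m + 1, by ring⟩ y)) (mem_range.2 hk)

theorem Efun_pos (hk : 1 ≤ k) {x : ℝ} (hx : 0 < x) : 0 < Efun k x :=
  (div_pos (by linarith) (pow_pos hx 2)).trans_le (one_add_div_sq_le_Efun hk (by linarith))

theorem Efun_neg_lt_Efun (hk : 1 ≤ k) {x : ℝ} (hx : 0 < x) : Efun k (-x) < Efun k x := by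
  rw [Efun_eq_sum_range, Efun_eq_sum_range]
  refine sum_lt_sum_of_nonempty (nonempty_range_iff.2 (by omega)) fun m _ => ?_
  rw [Even.neg_pow ⟨m + 1, by ring⟩]
  exact div_lt_div_of_pos_right (by linarith) (pow_pos hx _)

theorem tendsto_Efun_nhdsLT_zero (hk : 1 ≤ k) : Tendsto (Efun k) (𝓝[<] 0) atTop := by
  have hsq : Tendsto (fun y : ℝ => (y ^ 2)⁻¹) (𝓝[<] 0) atTop := by
    refine Tendsto.inv_tendsto_nhdsGT_zero
      (tendsto_nhdsWithin_of_tendsto_nhds_of_eventually_within _ ?_ ?_)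
    · exact ((continuous_pow 2).tendsto' 0 0 (by simp)).mono_left nhdsWithin_le_nhds
    · filter_upwards [self_mem_nhdsWithin] with y hy using sq_pos_of_neg hy.out
  have hlin : Tendsto (fun y : ℝ => 1 + y) (𝓝[<] 0) (𝓝 1) :=
    ((continuous_const_add 1).tendsto' 0 1 (add_zero 1)).mono_left nhdsWithin_le_nhds
  refine tendsto_atTop_mono' _ ?_ (hlin.pos_mul_atTop one_pos hsq)
  filter_upwards [Ioo_mem_nhdsLT (show (-1 : ℝ) < 0 by norm_num)] with y hy
  exact one_add_div_sq_le_Efun hk hy.1.le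

theorem hasDerivAt_Efun (k : ℕ) {x : ℝ} (hx : x ≠ 0) :
    HasDerivAt (Efun k) (-∑ j ∈ Icc 1 (2 * k), (j : ℝ) / x ^ (j + 1)) x := by
  rw [← sum_neg_distrib]
  refine HasDerivAt.fun_sum fun j _ => ?_
  refine (hasDerivAt_zpow (-(j : ℤ)) x (Or.inl hx)).congr_deriv ?_
  rw [show -(j : ℤ) - 1 = -((j + 1 : ℕ) : ℤ) by push_cast; ring, zpow_neg, zpow_natCast]
  push_cast
  ring

end Efun

theorem two_mul_mul_le_one_add_pow (j : ℕ) {u : ℝ} (hu : 0 ≤ u) :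
    2 * j * u ≤ (1 + u) ^ (j + 1) := by
  set m := (j + 1) / 2
  have hm : j ≤ 2 * m ∧ 2 * m ≤ j + 1 := by omega
  have hjm : (j : ℝ) ≤ 2 * m := by exact_mod_cast hm.1
  have hbern : 1 + m * u ≤ (1 + u) ^ m := one_add_mul_le_pow (by linarith) m
  calc 2 * j * u ≤ 4 * m * u := by nlinarith
    _ ≤ (1 + m * u) ^ 2 := by nlinarith [sq_nonneg (1 - m * u)]
    _ ≤ ((1 + u) ^ m) ^ 2 := by gcongr
    _ = (1 + u) ^ (2 * m) := by ring
    _ ≤ (1 + u) ^ (j + 1) := pow_le_pow_right₀ (by linarith) hm.2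

theorem sum_div_neg_pow_lt {k : ℕ} (hk : 1 ≤ k) {s : ℝ} (hs₀ : 0 < s) (hs₁ : s < 1) :
    ∑ j ∈ Icc 1 (2 * k), (j : ℝ) / (-s) ^ (j + 1) < -k := by
  rw [sum_Icc_one_two_mul_eq_sum_range]
  calc _ < ∑ _m ∈ range k, (-1 : ℝ) :=
        sum_lt_sum_of_nonempty (nonempty_range_iff.2 (by omega)) fun m _ => ?_
    _ = -k := by simp
  rw [Even.neg_pow ⟨m + 1, by ring⟩, Odd.neg_pow ⟨m + 1, by ring⟩, pow_succ _ (2 * m + 2)]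
  have hp : 0 < s ^ (2 * m + 2) := pow_pos hs₀ _
  have hp₁ : s ^ (2 * m + 2) * s < 1 := by
    rw [← pow_succ]; exact pow_lt_one₀ hs₀.le hs₁ (by omega)
  have hm : (0 : ℝ) ≤ m := m.cast_nonneg
  have hpair : (2 * m + 1 : ℝ) * s - (2 * m + 2) + s ^ (2 * m + 2) * s < 0 := by nlinarith
  push_cast
  rw [div_neg, ← sub_eq_add_neg, div_sub_div _ _ hp.ne' (by positivity), div_lt_iff₀ (by positivity)]
  nlinarith [mul_lt_mul_of_pos_left hpair hp]

theorem neg_le_mul_sum_div_pow (k : ℕ) {κ t : ℝ} (ht : 1 ≤ t) (hx : 0 < 1 - κ * t) :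
    -(k : ℝ) ≤ κ * ∑ j ∈ Icc 1 (2 * k), (j : ℝ) / (1 - κ * t) ^ (j + 1) := by
  rcases le_or_gt 0 κ with hκ | hκ
  · have : 0 ≤ κ * ∑ j ∈ Icc 1 (2 * k), (j : ℝ) / (1 - κ * t) ^ (j + 1) :=
      mul_nonneg hκ (sum_nonneg fun j _ => by positivity)
    linarith [(k.cast_nonneg : (0 : ℝ) ≤ k)]
  rw [mul_sum]
  calc -(k : ℝ) = ∑ _j ∈ Icc 1 (2 * k), (-1 / 2 : ℝ) := by simp; ring
    _ ≤ _ := sum_le_sum fun j _ => ?_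
  have hu : 0 ≤ -κ * t := by nlinarith
  have hbound := two_mul_mul_le_one_add_pow j hu
  rw [show 1 - κ * t = 1 + -κ * t by ring, mul_div_assoc', le_div_iff₀ (by positivity)]
  nlinarith [mul_nonneg (mul_nonneg (neg_nonneg.2 hκ.le) j.cast_nonneg) (sub_nonneg.2 ht)]

section Threshold

variable {k : ℕ} {κ : ℝ}

theorem one_lt_two_div_one_add_max (hκ : κ < 1) : 1 < 2 / (1 + max κ 0) := by
  rw [lt_div_iff₀ (by positivity)]
  linarith [max_lt hκ one_pos]

theorem two_div_one_add_max_le_two (κ : ℝ) : 2 / (1 + max κ 0) ≤ 2 :=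
  div_le_self zero_le_two (by linarith [le_max_right κ 0])

theorem one_sub_mul_pos_of_le_two_div (hκ : κ < 1) {t : ℝ} (ht₀ : 0 ≤ t)
    (ht : t ≤ 2 / (1 + max κ 0)) : 0 < 1 - κ * t := by
  rcases le_or_gt κ 0 with h | h
  · nlinarith
  · rw [max_eq_left h.le, le_div_iff₀ (by linarith)] at ht
    nlinarith

theorem hasDerivAt_Tfun (k : ℕ) {t : ℝ} (hx : 1 - κ * t ≠ 0) (hy : 1 - t ≠ 0) :
    HasDerivAt (fun t => Tfun k t κ)
      (κ * ∑ j ∈ Icc 1 (2 * k), (j : ℝ) / (1 - κ * t) ^ (j + 1)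
        - ∑ j ∈ Icc 1 (2 * k), (j : ℝ) / (1 - t) ^ (j + 1)) t := by
  have h₁ := (hasDerivAt_Efun k hx).comp t (((hasDerivAt_id t).const_mul κ).const_sub 1)
  have h₂ := (hasDerivAt_Efun k hy).comp t ((hasDerivAt_id t).const_sub 1)
  exact (h₁.sub h₂).congr_deriv (by ring)

theorem continuousOn_Tfun (k : ℕ) (hκ : κ < 1) :
    ContinuousOn (fun t => Tfun k t κ) (Set.Ioc 1 (2 / (1 + max κ 0))) := fun t ht =>
  (hasDerivAt_Tfun k (one_sub_mul_pos_of_le_two_div hκ (by linarith [ht.1]) ht.2).ne'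
    (by linarith [ht.1])).continuousAt.continuousWithinAt

theorem strictMonoOn_Tfun (hk : 1 ≤ k) (hκ : κ < 1) :
    StrictMonoOn (fun t => Tfun k t κ) (Set.Ioo 1 (2 / (1 + max κ 0))) := by
  refine strictMonoOn_of_deriv_pos (convex_Ioo _ _)
    ((continuousOn_Tfun k hκ).mono Set.Ioo_subset_Ioc_self) fun t ht => ?_
  rw [interior_Ioo] at ht
  have hx := one_sub_mul_pos_of_le_two_div hκ (by linarith [ht.1]) ht.2.le
  rw [(hasDerivAt_Tfun k hx.ne' (by linarith [ht.1])).deriv]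
  have hκpart := neg_le_mul_sum_div_pow k ht.1.le hx
  have hpart := sum_div_neg_pow_lt hk (s := t - 1) (by linarith [ht.1])
    (by linarith [ht.2, two_div_one_add_max_le_two κ])
  rw [neg_sub] at hpart
  linarith

theorem Tfun_two_div_one_add_max_pos (hk : 1 ≤ k) (hκ : κ < 1) :
    0 < Tfun k (2 / (1 + max κ 0)) κ := by
  rw [Tfun, sub_pos]
  rcases le_or_gt κ 0 with h | h
  · rw [max_eq_right h]
    norm_num [Efun_neg_one]
    exact Efun_pos hk (by linarith)
  · have hx := one_sub_mul_pos_of_le_two_div hκ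
      (zero_lt_one.trans (one_lt_two_div_one_add_max hκ)).le le_rfl
    rw [max_eq_left h.le] at hx ⊢
    rw [show 1 - 2 / (1 + κ) = -(1 - κ * (2 / (1 + κ))) by field_simp; ring]
    exact Efun_neg_lt_Efun hk hx

theorem tendsto_Tfun_nhdsGT_one (hk : 1 ≤ k) (hκ : κ ≠ 1) :
    Tendsto (fun t => Tfun k t κ) (𝓝[>] 1) atBot := by
  have hx : Tendsto (fun t => Efun k (1 - κ * t)) (𝓝[>] 1) (𝓝 (Efun k (1 - κ * 1))) :=
    ((hasDerivAt_Efun k (by rwa [mul_one, sub_ne_zero, ne_comm])).continuousAt.tendsto.comp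
      ((by fun_prop : Continuous fun t : ℝ => 1 - κ * t).tendsto 1)).mono_left
      nhdsWithin_le_nhds
  have hy : Tendsto (fun t : ℝ => 1 - t) (𝓝[>] 1) (𝓝[<] 0) := by
    refine tendsto_nhdsWithin_of_tendsto_nhds_of_eventually_within _ ?_ ?_
    · exact ((continuous_const.sub continuous_id).tendsto' 1 0 (sub_self 1)).mono_left
        nhdsWithin_le_nhds
    · filter_upwards [self_mem_nhdsWithin] with t ht using sub_neg.2 ht.out
  simpa only [Tfun, sub_eq_add_neg, Function.comp_def] using
    hx.add_atBot (tendsto_neg_atTop_atBot.comp ((tendsto_Efun_nhdsLT_zero hk).comp hy))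

end Threshold

/-- **Existence and uniqueness of the stepsize thresholds `γ̄_k`
(Definition 4 / `def:stepsize_thresholds`).** For every `κ < 1` and integer `k ≥ 1`,
`T_k(·, κ)` has a unique root in the open interval `(1, 2/(1 + [κ]₊))`. -/
theorem stepsize_threshold_exists_unique (κ : ℝ) (hκ : κ < 1) (k : ℕ) (hk : 1 ≤ k) :
    ∃! t : ℝ, t ∈ Set.Ioo 1 (2 / (1 + max κ 0)) ∧ Tfun k t κ = 0 := by
  obtain ⟨t₀, hT₀, ht₀⟩ := (((tendsto_Tfun_nhdsGT_one hk hκ.ne).eventually_lt_atBot 0).and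
    (Ioo_mem_nhdsGT (one_lt_two_div_one_add_max hκ))).exists
  obtain ⟨t, ht, hTt⟩ := intermediate_value_Ioo ht₀.2.le
    ((continuousOn_Tfun k hκ).mono (Set.Icc_subset_Ioc ht₀.1 le_rfl))
    ⟨hT₀, Tfun_two_div_one_add_max_pos hk hκ⟩
  have ht' : t ∈ Set.Ioo 1 (2 / (1 + max κ 0)) := ⟨ht₀.1.trans ht.1, ht.2⟩
  exact ⟨t, ⟨ht', hTt⟩, fun s hs => (strictMonoOn_Tfun hk hκ).injOn hs.1 ht' (hs.2.trans hTt.symm)⟩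
end

section
/- Let L > 0 and μ < L, and let f : E → ℝ be a differentiable function on a real inner product space E with f ∈ F_{μ,L}. Then for all x, y ∈ E: ⟨∇f(x) − ∇f(y) − L(x − y), ∇f(x) − ∇f(y) − μ(x − y)⟩ ≤ 0. -/
/-!
Put `g = f - (μ/2)‖·‖²`, so that `∇g = ∇f - μ • id`, `g` is convex and
`((L - μ)/2)‖·‖² - g = (L/2)‖·‖² - f` is convex: `g` is convex and `(L - μ)`-smooth. The claim is
then the cocoercivity `‖∇g x - ∇g y‖² ≤ (L - μ) ⟪∇g x - ∇g y, x - y⟫` of `g`. Cocoercivity is the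
sum of the two instances of `g a + ⟪∇g a, b - a⟫ + ‖∇g b - ∇g a‖² / (2(L - μ)) ≤ g b`, obtained by
evaluating `g` at a gradient step from `b`, bounded below by convexity at `a` and above by the
quadratic upper bound at `b`.
-/

open Set
open scoped RealInnerProductSpace

theorem ConvexOn.le_sub_of_hasFDerivAt {F : Type*} [NormedAddCommGroup F] [NormedSpace ℝ F]
    {g : F → ℝ} {g' : F →L[ℝ] ℝ} {x : F} (hc : ConvexOn ℝ univ g) (hg : HasFDerivAt g g' x)
    (y : F) : g' (y - x) ≤ g y - g x := by
  have hline : ConvexOn ℝ univ (g ∘ AffineMap.lineMap (k := ℝ) x y) := by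
    simpa using hc.comp_affineMap (AffineMap.lineMap x y)
  have hderiv : HasDerivAt (g ∘ AffineMap.lineMap (k := ℝ) x y) (g' (y - x)) 0 :=
    hg.comp_hasDerivAt_of_eq 0 AffineMap.hasDerivAt_lineMap (by simp)
  simpa [slope_def_field] using
    hline.le_slope_of_hasDerivAt (mem_univ 0) (mem_univ 1) zero_lt_one hderiv

section InnerProductSpace

variable {E : Type*} [NormedAddCommGroup E] [InnerProductSpace ℝ E]

theorem hasFDerivAt_half_mul_norm_sq (c : ℝ) (x : E) :
    HasFDerivAt (fun z : E => c / 2 * ‖z‖ ^ 2) (c • innerSL ℝ x) x := by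
  refine ((hasStrictFDerivAt_norm_sq x).hasFDerivAt.const_mul (c / 2)).congr_fderiv ?_
  ext v
  simp only [smul_apply, coe_innerSL_apply, nsmul_eq_mul, Nat.cast_ofNat, smul_eq_mul]
  ring

theorem le_add_add_half_mul_norm_sq_of_convexOn {g : E → ℝ} {g' : E →L[ℝ] ℝ} {S : ℝ} {a : E}
    (hg : HasFDerivAt g g' a) (hsmooth : ConvexOn ℝ univ (fun z => S / 2 * ‖z‖ ^ 2 - g z))
    (b : E) : g b ≤ g a + g' (b - a) + S / 2 * ‖b - a‖ ^ 2 := by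
  have h := hsmooth.le_sub_of_hasFDerivAt ((hasFDerivAt_half_mul_norm_sq S a).sub hg) b
  have hnorm : ‖b - a‖ ^ 2 = ‖b‖ ^ 2 - 2 * ⟪a, b - a⟫ - ‖a‖ ^ 2 := by
    rw [norm_sub_sq_real, inner_sub_right, real_inner_self_eq_norm_sq, real_inner_comm]
    ring
  simp only [sub_apply, smul_apply, coe_innerSL_apply, smul_eq_mul] at h
  rw [hnorm]
  linarith

variable [CompleteSpace E]

theorem HasGradientAt.sub_half_mul_norm_sq {f : E → ℝ} {f' x : E} (hf : HasGradientAt f f' x)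
    (c : ℝ) : HasGradientAt (fun z => f z - c / 2 * ‖z‖ ^ 2) (f' - c • x) x := by
  rw [hasGradientAt_iff_hasFDerivAt] at hf ⊢
  refine (hf.sub (hasFDerivAt_half_mul_norm_sq c x)).congr_fderiv ?_
  ext v
  simp only [sub_apply, InnerProductSpace.toDual_apply_apply, smul_apply, coe_innerSL_apply,
    smul_eq_mul, map_sub, map_smul]

theorem ConvexOn.add_inner_add_norm_sq_div_le {g : E → ℝ} {S : ℝ} (hS : 0 < S)
    (hconv : ConvexOn ℝ univ g) (hsmooth : ConvexOn ℝ univ (fun z => S / 2 * ‖z‖ ^ 2 - g z))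
    {a b ga gb : E} (ha : HasGradientAt g ga a) (hb : HasGradientAt g gb b) :
    g a + ⟪ga, b - a⟫ + ‖gb - ga‖ ^ 2 / (2 * S) ≤ g b := by
  -- a gradient step from `b` for `g - ⟪ga, ·⟫`, a function minimal at `a`
  set z := b - S⁻¹ • (gb - ga)
  have hlower : g a + ⟪ga, z - a⟫ ≤ g z := by
    have := hconv.le_sub_of_hasFDerivAt ha.hasFDerivAt z
    rw [InnerProductSpace.toDual_apply_apply] at this
    linarith
  have hupper : g z ≤ g b + ⟪gb, z - b⟫ + S / 2 * ‖z - b‖ ^ 2 := by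
    simpa using le_add_add_half_mul_norm_sq_of_convexOn hb.hasFDerivAt hsmooth z
  have hzb : z - b = -(S⁻¹ • (gb - ga)) := sub_sub_cancel_left b _
  have hza : z - a = (b - a) - S⁻¹ • (gb - ga) := sub_right_comm b _ a
  have hdiff : ⟪gb, gb - ga⟫ - ⟪ga, gb - ga⟫ = ‖gb - ga‖ ^ 2 := by
    rw [← inner_sub_left, real_inner_self_eq_norm_sq]
  rw [hza, inner_sub_right, real_inner_smul_right] at hlower
  rw [hzb, inner_neg_right, real_inner_smul_right, norm_neg, norm_smul, mul_pow,
    Real.norm_eq_abs, sq_abs] at hupper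
  have hS' : S * S⁻¹ = 1 := mul_inv_cancel₀ hS.ne'
  linear_combination hlower + hupper - S⁻¹ * hdiff + ‖gb - ga‖ ^ 2 * S⁻¹ / 2 * hS'

theorem ConvexOn.norm_sub_sq_le_mul_inner {g : E → ℝ} {S : ℝ} (hS : 0 < S)
    (hconv : ConvexOn ℝ univ g) (hsmooth : ConvexOn ℝ univ (fun z => S / 2 * ‖z‖ ^ 2 - g z))
    {x y gx gy : E} (hx : HasGradientAt g gx x) (hy : HasGradientAt g gy y) :
    ‖gx - gy‖ ^ 2 ≤ S * ⟪gx - gy, x - y⟫ := by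
  have hxy := hconv.add_inner_add_norm_sq_div_le hS hsmooth hx hy
  have hyx := hconv.add_inner_add_norm_sq_div_le hS hsmooth hy hx
  rw [norm_sub_rev] at hxy
  have hinner : ⟪gx, y - x⟫ + ⟪gy, x - y⟫ = -⟪gx - gy, x - y⟫ := by
    rw [← neg_sub x y, inner_neg_right, inner_sub_left]; ring
  have hhalves : ‖gx - gy‖ ^ 2 / S = ‖gx - gy‖ ^ 2 / (2 * S) + ‖gx - gy‖ ^ 2 / (2 * S) := by ring
  have hquot : ‖gx - gy‖ ^ 2 / S ≤ ⟪gx - gy, x - y⟫ := by linarith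
  rwa [div_le_iff₀' hS] at hquot

end InnerProductSpace

theorem extended_cocoercivity_general
    {E : Type*} [NormedAddCommGroup E] [InnerProductSpace ℝ E] [CompleteSpace E]
    (L μ : ℝ) (hμL : μ < L)
    (f : E → ℝ) (hdiff : Differentiable ℝ f)
    (hsmooth : ConvexOn ℝ Set.univ (fun z => L / 2 * ‖z‖ ^ 2 - f z))
    (hcurv : ConvexOn ℝ Set.univ (fun z => f z - μ / 2 * ‖z‖ ^ 2))
    (x y : E) :
    (inner ℝ (gradient f x - gradient f y - L • (x - y))
           (gradient f x - gradient f y - μ • (x - y)) : ℝ) ≤ 0 := by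
  have hgrad (z : E) := (hdiff z).hasGradientAt.sub_half_mul_norm_sq μ
  have hsmooth' : ConvexOn ℝ univ
      (fun z => (L - μ) / 2 * ‖z‖ ^ 2 - (f z - μ / 2 * ‖z‖ ^ 2)) := by
    convert hsmooth using 2; ring
  have hco := hcurv.norm_sub_sq_le_mul_inner (sub_pos.2 hμL) hsmooth' (hgrad x) (hgrad y)
  have hG : gradient f x - μ • x - (gradient f y - μ • y)
      = gradient f x - gradient f y - μ • (x - y) := by rw [smul_sub]; abel
  have hL : gradient f x - gradient f y - L • (x - y)
      = gradient f x - gradient f y - μ • (x - y) - (L - μ) • (x - y) := by rw [sub_smul]; abel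
  rw [hG] at hco
  rw [hL, inner_sub_left, real_inner_self_eq_norm_sq, real_inner_smul_left, real_inner_comm]
  linarith

/-- **Extended cocoercivity (Corollary 3 / `corr:direct_sum_interp_cond`).**
For `f ∈ F_{μ,L}` with `μ < L`, `L > 0`, and all `x, y`:
`⟨∇f(x) − ∇f(y) − L(x−y), ∇f(x) − ∇f(y) − μ(x−y)⟩ ≤ 0`. -/
theorem extended_cocoercivity
    {E : Type*} [NormedAddCommGroup E] [InnerProductSpace ℝ E] [CompleteSpace E]
    (L μ : ℝ) (hL : 0 < L) (hμL : μ < L)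
    (f : E → ℝ) (hdiff : Differentiable ℝ f)
    (hsmooth : ConvexOn ℝ Set.univ (fun z => L / 2 * ‖z‖ ^ 2 - f z))
    (hcurv : ConvexOn ℝ Set.univ (fun z => f z - μ / 2 * ‖z‖ ^ 2))
    (x y : E) :
    (inner ℝ (gradient f x - gradient f y - L • (x - y))
           (gradient f x - gradient f y - μ • (x - y)) : ℝ) ≤ 0 :=
  extended_cocoercivity_general L μ hμL f hdiff hsmooth hcurv x y
end

section
/- Let L > 0 and let f : E → ℝ be a differentiable function on a real inner product space E with f convex and x ↦ (L/2)‖x‖² − f(x) convex (f ∈ F_{0,L}). Let γ > 0 and let x' = x − γ∇f(x) be one gradient-descent step from a point x ∈ E. Then ‖∇f(x)‖² − ‖∇f(x')‖² ≥ ((2 − γL)/(γL)) · ‖∇f(x) − ∇f(x')‖². -/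
/-!
Restricting to the segment from `x` to `y` turns convexity into the tangent inequality
`f x + ⟪∇f x, y - x⟫ ≤ f y`; applied to `f` and to `L/2‖·‖² - f` it sandwiches `f` between its
tangent and the quadratic upper bound with curvature `L`. Evaluating both bounds at the minimiser
of their difference gives cocoercivity, `‖∇f u - ∇f w‖² ≤ L ⟪∇f u - ∇f w, u - w⟫`. For a gradient
step `x - x' = γ ∇f x`, so with `d = ∇f x - ∇f x'` this reads `‖d‖² ≤ γL ⟪∇f x, d⟫`, while
`‖∇f x‖² - ‖∇f x'‖² = 2 ⟪∇f x, d⟫ - ‖d‖²`.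
-/

open scoped RealInnerProductSpace

theorem ConvexOn.add_fderiv_le {F : Type*} [NormedAddCommGroup F] [NormedSpace ℝ F]
    {s : Set F} {f : F → ℝ} {f' : F →L[ℝ] ℝ} {x y : F}
    (hf : ConvexOn ℝ s f) (hx : x ∈ s) (hy : y ∈ s) (hf' : HasFDerivAt f f' x) :
    f x + f' (y - x) ≤ f y := by
  let ℓ : ℝ →ᵃ[ℝ] F := AffineMap.lineMap x y
  have hconv : ConvexOn ℝ (Set.Icc 0 1) (f ∘ ℓ) :=
    (hf.comp_affineMap ℓ).subset (fun _ ht => hf.1.lineMap_mem hx hy ht) (convex_Icc 0 1)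
  have hderiv : HasDerivAt (f ∘ ℓ) (f' (y - x)) 0 := by
    rw [← AffineMap.lineMap_apply_zero (k := ℝ) x y] at hf'
    exact hf'.comp_hasDerivAt 0 AffineMap.hasDerivAt_lineMap
  have hslope := hconv.le_slope_of_hasDerivAt (by simp) (by simp) one_pos hderiv
  simp only [slope_def_field, Function.comp_apply, ℓ, AffineMap.lineMap_apply_one,
    AffineMap.lineMap_apply_zero, sub_zero, div_one] at hslope
  linarith

section GradientInequalities

variable {E : Type*} [NormedAddCommGroup E] [InnerProductSpace ℝ E] [CompleteSpace E]
  {f : E → ℝ} {L : ℝ} {u : E}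

theorem ConvexOn.add_inner_gradient_le (hf : ConvexOn ℝ Set.univ f)
    (hd : DifferentiableAt ℝ f u) (w : E) : f u + ⟪gradient f u, w - u⟫ ≤ f w := by
  simpa using hf.add_fderiv_le (Set.mem_univ u) (Set.mem_univ w) hd.hasGradientAt.hasFDerivAt

theorem le_add_inner_gradient_add_norm_sq
    (hsmooth : ConvexOn ℝ Set.univ (fun z => L / 2 * ‖z‖ ^ 2 - f z))
    (hd : DifferentiableAt ℝ f u) (w : E) :
    f w ≤ f u + ⟪gradient f u, w - u⟫ + L / 2 * ‖w - u‖ ^ 2 := by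
  have hderiv : HasFDerivAt (fun z => L / 2 * ‖z‖ ^ 2 - f z)
      ((L / 2) • (2 • innerSL ℝ u) - InnerProductSpace.toDual ℝ E (gradient f u)) u :=
    ((hasStrictFDerivAt_norm_sq u).hasFDerivAt.const_mul (L / 2)).sub
      hd.hasGradientAt.hasFDerivAt
  have h := hsmooth.add_fderiv_le (Set.mem_univ u) (Set.mem_univ w) hderiv
  simp only [sub_apply, smul_apply, innerSL_apply_apply, InnerProductSpace.toDual_apply_apply,
    inner_sub_right, real_inner_self_eq_norm_sq, nsmul_eq_mul, Nat.cast_ofNat, smul_eq_mul] at h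
  rw [norm_sub_sq_real, real_inner_comm u w, inner_sub_right]
  linarith

variable (hL : 0 < L) (hcvx : ConvexOn ℝ Set.univ f)
  (hsmooth : ConvexOn ℝ Set.univ (fun z => L / 2 * ‖z‖ ^ 2 - f z)) (hdiff : Differentiable ℝ f)
include hL hcvx hsmooth hdiff

theorem add_inner_gradient_add_norm_sq_gradient_sub_le (u w : E) :
    f u + ⟪gradient f u, w - u⟫ + ‖gradient f w - gradient f u‖ ^ 2 / (2 * L) ≤ f w := by
  set d := gradient f w - gradient f u with hd_def
  -- `w - L⁻¹ • d` minimises the quadratic upper bound at `w` minus the tangent at `u`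
  have hlower := hcvx.add_inner_gradient_le (hdiff u) (w - L⁻¹ • d)
  have hupper := le_add_inner_gradient_add_norm_sq hsmooth (hdiff w) (w - L⁻¹ • d)
  rw [show w - L⁻¹ • d - u = (w - u) - L⁻¹ • d by abel, inner_sub_right,
    real_inner_smul_right] at hlower
  rw [show w - L⁻¹ • d - w = -(L⁻¹ • d) by abel, inner_neg_right, real_inner_smul_right, norm_neg,
    norm_smul, mul_pow, Real.norm_eq_abs, sq_abs] at hupper
  have hd_sq : ‖d‖ ^ 2 = ⟪gradient f w, d⟫ - ⟪gradient f u, d⟫ := by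
    rw [← inner_sub_left, ← hd_def, real_inner_self_eq_norm_sq]
  have h1 : L⁻¹ * ‖d‖ ^ 2 = L⁻¹ * ⟪gradient f w, d⟫ - L⁻¹ * ⟪gradient f u, d⟫ := by
    rw [hd_sq]; ring
  have h2 : L / 2 * (L⁻¹ ^ 2 * ‖d‖ ^ 2) = ‖d‖ ^ 2 / (2 * L) := by field_simp
  have h3 : ‖d‖ ^ 2 / (2 * L) = L⁻¹ * ‖d‖ ^ 2 / 2 := by field_simp
  linarith

theorem norm_sq_gradient_sub_le_mul_inner (u w : E) :
    ‖gradient f u - gradient f w‖ ^ 2 ≤ L * ⟪gradient f u - gradient f w, u - w⟫ := by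
  have huw := add_inner_gradient_add_norm_sq_gradient_sub_le hL hcvx hsmooth hdiff u w
  have hwu := add_inner_gradient_add_norm_sq_gradient_sub_le hL hcvx hsmooth hdiff w u
  rw [norm_sub_rev] at huw
  have hsum : ⟪gradient f u, w - u⟫ + ⟪gradient f w, u - w⟫
      = -⟪gradient f u - gradient f w, u - w⟫ := by
    rw [← neg_sub u w, inner_neg_right, inner_sub_left]; ring
  have hhalf : ‖gradient f u - gradient f w‖ ^ 2 / (2 * L) * 2
      = ‖gradient f u - gradient f w‖ ^ 2 / L := by
    field_simp
  rw [← div_le_iff₀' hL]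
  linarith

end GradientInequalities

/-- **Monotonicity of the gradient norm along gradient descent for convex functions
(Lemma 2 / `lemma:monotonicity_gradient_cvx_case`).**
For `f ∈ F_{0,L}`, `γ > 0` and one step `x' = x − γ∇f(x)`:
`‖∇f(x)‖² − ‖∇f(x')‖² ≥ ((2 − γL)/(γL))·‖∇f(x) − ∇f(x')‖²`. -/
theorem gradient_norm_decrease_convex
    {E : Type*} [NormedAddCommGroup E] [InnerProductSpace ℝ E] [CompleteSpace E]
    (L : ℝ) (hL : 0 < L) (f : E → ℝ) (hdiff : Differentiable ℝ f)
    (hcvx : ConvexOn ℝ Set.univ f)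
    (hsmooth : ConvexOn ℝ Set.univ (fun z => L / 2 * ‖z‖ ^ 2 - f z))
    (γ : ℝ) (hγ : 0 < γ)
    (x x' : E) (hx' : x' = x - γ • gradient f x) :
    ‖gradient f x‖ ^ 2 - ‖gradient f x'‖ ^ 2 ≥
      (2 - γ * L) / (γ * L) * ‖gradient f x - gradient f x'‖ ^ 2 := by
  set g := gradient f x
  set d := g - gradient f x'
  have hstep : x - x' = γ • g := by rw [hx', sub_sub_cancel]
  have hcoco : ‖d‖ ^ 2 ≤ γ * L * ⟪g, d⟫ := by
    have h := norm_sq_gradient_sub_le_mul_inner hL hcvx hsmooth hdiff x x'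
    rw [hstep, real_inner_smul_right, real_inner_comm] at h
    linarith
  have hdiffsq : ‖g‖ ^ 2 - ‖gradient f x'‖ ^ 2 = 2 * ⟪g, d⟫ - ‖d‖ ^ 2 := by
    rw [← sub_sub_cancel g (gradient f x'), norm_sub_sq_real]; ring
  rw [ge_iff_le, hdiffsq, div_mul_eq_mul_div, div_le_iff₀ (by positivity)]
  linarith
end
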